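/- arXiv:1106.1791 — 4 statements merged into one kernel-verified Lean document; each statement's English description precedes it below -/
import Mathlib

section
/- Let F be a map assigning to every measure-preserving function f : (X,p) → (Y,q) between finite probability spaces a number F(f) ∈ [0,∞). Suppose F satisfies: (1) Functoriality: F(f ∘ g) = F(f) + F(g) whenever f and g are composable measure-preserving functions; (2) Convex linearity: F(λf ⊕ (1−λ)g) = λF(f) + (1−λ)F(g) for all measure-preserving functions f, g and all λ ∈ [0,1]; (3) Continuity: F(f_n) → F(f) whenever f_n is a sequence of measure-preserving functions converging to f. Then there exists a constant c ≥ 0 such that F(f) = c(H(p) − H(q)) for every measure-preserving function f : (X,p) → (Y,q), where H denotes Shannon entropy. -/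
open scoped BigOperators Classical
open Filter Topology Real

def IsProb {X : Type} [Fintype X] (p : X → ℝ) : Prop :=
  (∀ i, 0 ≤ p i) ∧ ∑ i, p i = 1

def IsMeas {X : Type} [Fintype X] (p : X → ℝ) : Prop :=
  ∀ i, 0 ≤ p i

def IsMP {X Y : Type} [Fintype X] [Fintype Y] (p : X → ℝ) (q : Y → ℝ) (f : X → Y) : Prop :=
  ∀ j : Y, q j = ∑ i, if f i = j then p i else 0

-- The convention `0 * log 0 = 0` is automatic since `Real.log 0 = 0`.
noncomputable def shannon {X : Type} [Fintype X] (p : X → ℝ) : ℝ :=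
  -∑ i, p i * Real.log (p i)

noncomputable def cvx (lam : ℝ) {X Y : Type} (p : X → ℝ) (q : Y → ℝ) : X ⊕ Y → ℝ :=
  Sum.elim (fun i => lam * p i) (fun j => (1 - lam) * q j)

def dsum {X Y : Type} (p : X → ℝ) (q : Y → ℝ) : X ⊕ Y → ℝ :=
  Sum.elim p q

noncomputable def shannonExt {X : Type} [Fintype X] (p : X → ℝ) : ℝ :=
  if (∑ i, p i) = 0 then 0 else (∑ i, p i) * shannon (fun i => p i / ∑ j, p j)

noncomputable def tsallis (α : ℝ) {X : Type} [Fintype X] (p : X → ℝ) : ℝ :=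
  if α = 1 then shannon p else (1 / (α - 1)) * (1 - ∑ i, p i ^ α)

noncomputable def tsallisExt (α : ℝ) {X : Type} [Fintype X] (p : X → ℝ) : ℝ :=
  if (∑ i, p i) = 0 then 0 else (∑ i, p i) ^ α * tsallis α (fun i => p i / ∑ j, p j)

/-!
Functoriality gives `F (f : p → q) = I p - I q` for `I p := F (p → 1)` (`lossToPoint`), so it
suffices to show `I = c • H`. Convex linearity yields the grouping rule
`I (λ p ⊕ (1 - λ) q) = φ λ + λ I p + (1 - λ) I q`, where `φ λ` (`lossBinary`) is `I` of the
two-point measure `(λ, 1 - λ)`, and continuity of `F` makes `φ` continuous. On uniform measures,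
`u n := I (1/n, …, 1/n)` (`lossUniform`) satisfies `u (m n) = u m + u n` and
`u (n + 1) = φ (n / (n + 1)) + n / (n + 1) * u n`; the latter gives `u (n + 1) - u n → 0` by
a Cesàro argument, and an additive function with this property is `c log n`. Hence
`φ = c • binEntropy` on the rationals `m / (m + n)`, so on `[0, 1]` by continuity, and splitting
off one point at a time with the grouping rule gives `I = c • H`.
-/

lemma exists_abs_le_of_abs_sub_half_le {g : ℕ → ℝ} {δ : ℝ} {K : ℕ}
    (h : ∀ N ≥ K, |g N - g (N / 2)| ≤ δ) :
    ∃ C, ∀ (j N : ℕ), N < 2 ^ j → |g N| ≤ C + δ * j := by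
  have hδ : 0 ≤ δ := (abs_nonneg _).trans (h K le_rfl)
  set C := ∑ i ∈ Finset.range (K + 1), |g i|
  have hC : ∀ N ≤ K, |g N| ≤ C := fun N hN =>
    Finset.single_le_sum (f := fun i => |g i|) (fun i _ => abs_nonneg _)
      (Finset.mem_range.2 (Nat.lt_succ_of_le hN))
  refine ⟨C, fun j => ?_⟩
  induction j with
  | zero =>
    intro N hN
    simpa using hC N (by simp_all)
  | succ j ih =>
    intro N hN
    rcases le_or_gt N K with hNK | hKN
    · have := hC N hNK
      push_cast
      nlinarith
    · have hhalf := ih (N / 2) (Nat.div_lt_of_lt_mul (by rwa [pow_succ, mul_comm] at hN))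
      calc |g N| ≤ |g N - g (N / 2)| + |g (N / 2)| :=
            sub_le_iff_le_add.1 (abs_sub_abs_le_abs_sub _ _)
        _ ≤ δ + (C + δ * j) := add_le_add (h N hKN.le) hhalf
        _ = _ := by push_cast; ring

theorem eq_zero_of_map_mul_of_tendsto_sub {g : ℕ → ℝ}
    (hmul : ∀ m n, 0 < m → 0 < n → g (m * n) = g m + g n) (htwo : g 2 = 0)
    (hsucc : Tendsto (fun n => g (n + 1) - g n) atTop (𝓝 0)) {n : ℕ} (hn : 0 < n) :
    g n = 0 := by
  have hpow : ∀ k : ℕ, g (n ^ (k + 1)) = (k + 1) * g n := by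
    intro k
    induction k with
    | zero => simp
    | succ k ih =>
      rw [pow_succ, hmul _ _ (by positivity) hn, ih]
      push_cast
      ring
  have hsmall : ∀ δ > 0, |g n| ≤ δ * n := by
    intro δ hδ
    obtain ⟨K, hK⟩ := Metric.tendsto_atTop.1 hsucc δ hδ
    -- `g (2 * a) = g a`, so halving changes `g` by at most one increment `g (m + 1) - g m`
    have hhalf : ∀ N ≥ 2 * K + 2, |g N - g (N / 2)| ≤ δ := by
      intro N hN
      have hdouble : g (2 * (N / 2)) = g (N / 2) := by
        rw [hmul 2 _ two_pos (by omega), htwo, zero_add]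
      rcases Nat.even_or_odd' N with ⟨a, rfl | rfl⟩
      · rw [Nat.mul_div_cancel_left a two_pos] at hdouble ⊢
        rw [hdouble, sub_self, abs_zero]
        exact hδ.le
      · have h2a : (2 * a + 1) / 2 = a := by omega
        rw [h2a] at hdouble ⊢
        rw [← hdouble]
        have := hK (2 * a) (by omega)
        rw [Real.dist_eq, sub_zero] at this
        exact this.le
    obtain ⟨C, hC⟩ := exists_abs_le_of_abs_sub_half_le hhalf
    have hbound : ∀ k : ℕ, |g n| ≤ C / (k + 1) + δ * n := by
      intro k
      have hlt : n ^ (k + 1) < 2 ^ (n * (k + 1)) := by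
        rw [pow_mul]
        exact Nat.pow_lt_pow_left Nat.lt_two_pow_self (by omega)
      have := hC _ _ hlt
      rw [hpow, abs_mul, abs_of_pos (by positivity)] at this
      rw [div_add' _ _ _ (by positivity), le_div_iff₀ (by positivity)]
      push_cast at this
      linarith
    have hlim : Tendsto (fun k : ℕ => C / (k + 1) + δ * n) atTop (𝓝 (δ * n)) := by
      simpa [div_eq_mul_one_div C] using
        (tendsto_one_div_add_atTop_nhds_zero_nat.const_mul C).add_const (δ * n)
    exact ge_of_tendsto hlim (Eventually.of_forall hbound)
  have hnR : (0 : ℝ) < n := by exact_mod_cast hn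
  refine abs_nonpos_iff.1 (le_of_forall_pos_le_add fun ε hε => ?_)
  simpa [div_mul_cancel₀ _ hnR.ne'] using hsmall (ε / n) (by positivity)

theorem eq_mul_log_of_map_mul_of_tendsto_sub {f : ℕ → ℝ}
    (hmul : ∀ m n, 0 < m → 0 < n → f (m * n) = f m + f n)
    (hsucc : Tendsto (fun n => f (n + 1) - f n) atTop (𝓝 0)) {n : ℕ} (hn : 0 < n) :
    f n = f 2 / log 2 * log n := by
  have hlog2 : log 2 ≠ 0 := (Real.log_pos one_lt_two).ne'
  have := eq_zero_of_map_mul_of_tendsto_sub (g := fun n => f n - f 2 / log 2 * log n)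
    (fun m n hm hn => ?_) ?_ ?_ hn
  · exact sub_eq_zero.1 this
  · push_cast
    rw [hmul m n hm hn, Real.log_mul (by positivity) (by positivity)]
    ring
  · push_cast
    field_simp
    ring
  · have := hsucc.sub (tendsto_log_nat_add_one_sub_log.const_mul (f 2 / log 2))
    simp only [sub_zero, mul_zero] at this
    convert this using 2 with k
    push_cast
    ring

lemma shannon_eq_sum_negMulLog {X : Type} [Fintype X] (p : X → ℝ) :
    shannon p = ∑ i, negMulLog (p i) := by
  simp [shannon, negMulLog, Finset.sum_neg_distrib]

lemma shannon_comp_equiv {X Y : Type} [Fintype X] [Fintype Y] (q : Y → ℝ) (e : X ≃ Y) :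
    shannon (q ∘ e) = shannon q := by
  simp only [shannon_eq_sum_negMulLog, Function.comp_apply]
  exact e.sum_comp (fun y => negMulLog (q y))

lemma shannon_cvx {X Y : Type} [Fintype X] [Fintype Y] {p : X → ℝ} {q : Y → ℝ}
    (hp : ∑ i, p i = 1) (hq : ∑ j, q j = 1) (lam : ℝ) :
    shannon (cvx lam p q) = binEntropy lam + lam * shannon p + (1 - lam) * shannon q := by
  simp only [shannon_eq_sum_negMulLog, Fintype.sum_sum_type, cvx, Sum.elim_inl, Sum.elim_inr,
    negMulLog_mul, Finset.sum_add_distrib, ← Finset.sum_mul, ← Finset.mul_sum, hp, hq,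
    binEntropy_eq_negMulLog_add_negMulLog_one_sub]
  ring

lemma binEntropy_div_add {a b : ℝ} (ha : 0 < a) (hb : 0 < b) :
    binEntropy (a / (a + b)) = log (a + b) - a / (a + b) * log a - b / (a + b) * log b := by
  have hab : 1 - a / (a + b) = b / (a + b) := by field_simp; ring
  rw [binEntropy, hab, inv_div, inv_div, log_div (by positivity) ha.ne',
    log_div (by positivity) hb.ne']
  field_simp
  ring

lemma exists_tendsto_div_add {x : ℝ} (hx0 : 0 ≤ x) (hx1 : x ≤ 1) :
    ∃ m n : ℕ → ℕ, (∀ t, 0 < m t) ∧ (∀ t, 0 < n t) ∧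
      Tendsto (fun t => (m t : ℝ) / (m t + n t)) atTop (𝓝 x) := by
  have hfloor : ∀ t : ℕ, ⌊x * t⌋₊ ≤ t := fun t =>
    Nat.floor_le_of_le (mul_le_of_le_one_left (Nat.cast_nonneg t) hx1)
  refine ⟨fun t => ⌊x * t⌋₊ + 1, fun t => t + 1 - ⌊x * t⌋₊, fun t => Nat.succ_pos _,
    fun t => Nat.sub_pos_of_lt (Nat.lt_succ_of_le (hfloor t)), ?_⟩
  have hden : ∀ t : ℕ, ((⌊x * t⌋₊ + 1 : ℕ) : ℝ) + ((t + 1 - ⌊x * t⌋₊ : ℕ) : ℝ) = t + 2 := by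
    intro t
    rw [Nat.cast_sub (by have := hfloor t; omega)]
    push_cast
    ring
  simp only [hden]
  have hinv : Tendsto (fun t : ℕ => ((t : ℝ) + 2)⁻¹) atTop (𝓝 0) :=
    tendsto_inv_atTop_zero.comp (tendsto_atTop_add_const_right _ 2 tendsto_natCast_atTop_atTop)
  refine tendsto_of_tendsto_of_tendsto_of_le_of_le
    (by simpa using (hinv.const_mul (2 * x)).const_sub x) (by simpa using hinv.const_add x)
    (fun t => ?_) (fun t => ?_)
  · have := Nat.lt_floor_add_one (x * t)
    rw [le_div_iff₀ (by positivity)]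
    push_cast
    field_simp
    nlinarith
  · have := Nat.floor_le (mul_nonneg hx0 (Nat.cast_nonneg t))
    rw [div_le_iff₀ (by positivity)]
    push_cast
    field_simp
    nlinarith

def onePoint : Unit → ℝ := fun _ => 1

lemma isProb_onePoint : IsProb onePoint := ⟨fun _ => zero_le_one, by simp [onePoint]⟩

lemma shannon_onePoint : shannon onePoint = 0 := by simp [shannon, onePoint]

lemma isMP_toUnit {X : Type} [Fintype X] {p : X → ℝ} (hp : ∑ i, p i = 1) :
    IsMP p onePoint (fun _ => ()) := fun _ => by simp [onePoint, hp]

lemma isMP_id {X : Type} [Fintype X] (p : X → ℝ) : IsMP p p id := fun j => by simp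

lemma isMP_comp_equiv {X Y : Type} [Fintype X] [Fintype Y] (q : Y → ℝ) (e : X ≃ Y) :
    IsMP (q ∘ e) q e := fun j =>
  (e.sum_comp fun y => if y = j then q y else 0).trans (by simp) |>.symm

lemma IsProb.comp_equiv {X Y : Type} [Fintype X] [Fintype Y] {q : Y → ℝ} (hq : IsProb q)
    (e : X ≃ Y) : IsProb (q ∘ e) :=
  ⟨fun _ => hq.1 _, (e.sum_comp q).trans hq.2⟩

lemma isProb_cvx {X Y : Type} [Fintype X] [Fintype Y] {p : X → ℝ} {q : Y → ℝ} {lam : ℝ}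
    (h0 : 0 ≤ lam) (h1 : lam ≤ 1) (hp : IsProb p) (hq : IsProb q) : IsProb (cvx lam p q) := by
  refine ⟨Sum.rec (fun x => mul_nonneg h0 (hp.1 x)) (fun y => mul_nonneg (by linarith) (hq.1 y)),
    ?_⟩
  simp only [Fintype.sum_sum_type, cvx, Sum.elim_inl, Sum.elim_inr, ← Finset.mul_sum, hp.2, hq.2]
  ring

lemma IsMP.sumMap {X X' Y Y' : Type} [Fintype X] [Fintype X'] [Fintype Y] [Fintype Y']
    {p : X → ℝ} {p' : X' → ℝ} {q : Y → ℝ} {q' : Y' → ℝ} {f : X → X'} {g : Y → Y'}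
    (hf : IsMP p p' f) (hg : IsMP q q' g) (lam : ℝ) :
    IsMP (cvx lam p q) (cvx lam p' q') (Sum.map f g) := by
  rintro (j | j)
  · simp [cvx, Fintype.sum_sum_type, hf j, Finset.mul_sum, apply_ite]
  · simp [cvx, Fintype.sum_sum_type, hg j, Finset.mul_sum, apply_ite]

structure IsInfoLoss
    (F : ∀ {X Y : Type} [Fintype X] [Fintype Y], (X → ℝ) → (Y → ℝ) → (X → Y) → ℝ) : Prop where
  nonneg : ∀ {X Y : Type} [Fintype X] [Fintype Y] (p : X → ℝ) (q : Y → ℝ) (f : X → Y),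
    IsProb p → IsProb q → IsMP p q f → 0 ≤ F p q f
  map_comp : ∀ {X Y Z : Type} [Fintype X] [Fintype Y] [Fintype Z]
    (p : X → ℝ) (q : Y → ℝ) (r : Z → ℝ) (g : X → Y) (f : Y → Z),
    IsProb p → IsProb q → IsProb r → IsMP p q g → IsMP q r f →
    F p r (f ∘ g) = F q r f + F p q g
  map_cvx : ∀ {X X' Y Y' : Type} [Fintype X] [Fintype X'] [Fintype Y] [Fintype Y']
    (p : X → ℝ) (p' : X' → ℝ) (q : Y → ℝ) (q' : Y' → ℝ) (f : X → X') (g : Y → Y')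
    (lam : ℝ), 0 ≤ lam → lam ≤ 1 →
    IsProb p → IsProb p' → IsProb q → IsProb q' → IsMP p p' f → IsMP q q' g →
    F (cvx lam p q) (cvx lam p' q') (Sum.map f g)
      = lam * F p p' f + (1 - lam) * F q q' g
  tendsto : ∀ {X Y : Type} [Fintype X] [Fintype Y]
    (pn : ℕ → X → ℝ) (qn : ℕ → Y → ℝ) (fn : ℕ → X → Y)
    (p : X → ℝ) (q : Y → ℝ) (f : X → Y),
    (∀ n, IsProb (pn n)) → (∀ n, IsProb (qn n)) → (∀ n, IsMP (pn n) (qn n) (fn n)) →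
    IsProb p → IsProb q → IsMP p q f →
    (∀ᶠ n in atTop, fn n = f) →
    (∀ i, Tendsto (fun n => pn n i) atTop (𝓝 (p i))) →
    (∀ j, Tendsto (fun n => qn n j) atTop (𝓝 (q j))) →
    Tendsto (fun n => F (pn n) (qn n) (fn n)) atTop (𝓝 (F p q f))

noncomputable section

variable (F : ∀ {X Y : Type} [Fintype X] [Fintype Y], (X → ℝ) → (Y → ℝ) → (X → Y) → ℝ)

def lossToPoint {X : Type} [Fintype X] (p : X → ℝ) : ℝ := F p onePoint (fun _ => ())

def lossBinary (lam : ℝ) : ℝ := lossToPoint F (cvx lam onePoint onePoint)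

def uniform (n : ℕ) : Fin n → ℝ := fun _ => (n : ℝ)⁻¹

def lossUniform (n : ℕ) : ℝ := lossToPoint F (uniform n)

end

lemma isProb_uniform {n : ℕ} (hn : 0 < n) : IsProb (uniform n) :=
  ⟨fun _ => inv_nonneg.2 (Nat.cast_nonneg n), by simp [uniform, (Nat.cast_pos.2 hn).ne']⟩

namespace IsInfoLoss

variable {F : ∀ {X Y : Type} [Fintype X] [Fintype Y], (X → ℝ) → (Y → ℝ) → (X → Y) → ℝ}

lemma map_id (hF : IsInfoLoss F) {X : Type} [Fintype X] {p : X → ℝ} (hp : IsProb p) :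
    F p p id = 0 := by
  have := hF.map_comp p p p id id hp hp hp (isMP_id p) (isMP_id p)
  rw [Function.id_comp] at this
  linarith

lemma lossToPoint_nonneg (hF : IsInfoLoss F) {X : Type} [Fintype X] {p : X → ℝ}
    (hp : IsProb p) : 0 ≤ lossToPoint F p :=
  hF.nonneg _ _ _ hp isProb_onePoint (isMP_toUnit hp.2)

lemma lossToPoint_eq_add (hF : IsInfoLoss F) {X Y : Type} [Fintype X] [Fintype Y]
    {p : X → ℝ} {q : Y → ℝ} {f : X → Y} (hp : IsProb p) (hq : IsProb q) (hf : IsMP p q f) :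
    lossToPoint F p = lossToPoint F q + F p q f :=
  hF.map_comp p q onePoint f _ hp hq isProb_onePoint hf (isMP_toUnit hq.2)

lemma lossToPoint_onePoint (hF : IsInfoLoss F) : lossToPoint F onePoint = 0 :=
  hF.map_id isProb_onePoint

lemma lossToPoint_eq_zero_of_isMP (hF : IsInfoLoss F) {X : Type} [Fintype X] {p : X → ℝ}
    {g : Unit → X} (hp : IsProb p) (hg : IsMP onePoint p g) : lossToPoint F p = 0 := by
  have h := hF.lossToPoint_eq_add isProb_onePoint hp hg
  linarith [hF.lossToPoint_onePoint, hF.lossToPoint_nonneg hp,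
    hF.nonneg _ _ _ isProb_onePoint hp hg]

lemma lossToPoint_comp_equiv (hF : IsInfoLoss F) {X Y : Type} [Fintype X] [Fintype Y]
    {q : Y → ℝ} (hq : IsProb q) (e : X ≃ Y) : lossToPoint F (q ∘ e) = lossToPoint F q := by
  have hqe := hq.comp_equiv e
  have hsymm : IsMP q (q ∘ e) e.symm := by
    simpa [Function.comp_def] using isMP_comp_equiv (q ∘ e) e.symm
  have h1 := hF.lossToPoint_eq_add hqe hq (isMP_comp_equiv q e)
  have h2 := hF.lossToPoint_eq_add hq hqe hsymm
  linarith [hF.nonneg _ _ _ hqe hq (isMP_comp_equiv q e), hF.nonneg _ _ _ hq hqe hsymm]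

lemma lossToPoint_cvx (hF : IsInfoLoss F) {X Y : Type} [Fintype X] [Fintype Y]
    {p : X → ℝ} {q : Y → ℝ} {lam : ℝ} (h0 : 0 ≤ lam) (h1 : lam ≤ 1)
    (hp : IsProb p) (hq : IsProb q) :
    lossToPoint F (cvx lam p q)
      = lossBinary F lam + lam * lossToPoint F p + (1 - lam) * lossToPoint F q := by
  have hmap := (isMP_toUnit hp.2).sumMap (isMP_toUnit hq.2) lam
  rw [hF.lossToPoint_eq_add (isProb_cvx h0 h1 hp hq) (isProb_cvx h0 h1 isProb_onePoint
    isProb_onePoint) hmap, hF.map_cvx _ _ _ _ _ _ lam h0 h1 hp isProb_onePoint hq isProb_onePoint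
    (isMP_toUnit hp.2) (isMP_toUnit hq.2), add_assoc]
  rfl

lemma lossBinary_one (hF : IsInfoLoss F) : lossBinary F 1 = 0 :=
  hF.lossToPoint_eq_zero_of_isMP (g := fun _ => Sum.inl ())
    (isProb_cvx zero_le_one le_rfl isProb_onePoint isProb_onePoint)
    (by rintro (j | j) <;> simp [cvx, onePoint])

lemma tendsto_lossBinary (hF : IsInfoLoss F) {lam : ℕ → ℝ} {x : ℝ}
    (h0 : ∀ n, 0 ≤ lam n) (h1 : ∀ n, lam n ≤ 1) (hx0 : 0 ≤ x) (hx1 : x ≤ 1)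
    (hlim : Tendsto lam atTop (𝓝 x)) :
    Tendsto (fun n => lossBinary F (lam n)) atTop (𝓝 (lossBinary F x)) := by
  have hpn n := isProb_cvx (h0 n) (h1 n) isProb_onePoint isProb_onePoint
  have hp := isProb_cvx hx0 hx1 isProb_onePoint isProb_onePoint
  refine hF.tendsto _ _ _ _ _ _ hpn (fun _ => isProb_onePoint) (fun n => isMP_toUnit (hpn n).2)
    hp isProb_onePoint (isMP_toUnit hp.2) (Eventually.of_forall fun _ => rfl) ?_
    (fun _ => tendsto_const_nhds)
  rintro (i | i)
  · simpa [cvx, onePoint] using hlim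
  · simpa [cvx, onePoint] using tendsto_const_nhds.sub hlim

lemma lossUniform_add (hF : IsInfoLoss F) {m n : ℕ} (hm : 0 < m) (hn : 0 < n) :
    lossUniform F (m + n) = lossBinary F (m / (m + n)) + m / (m + n) * lossUniform F m
      + n / (m + n) * lossUniform F n := by
  have hmR : (0 : ℝ) < m := Nat.cast_pos.2 hm
  have hnR : (0 : ℝ) < n := Nat.cast_pos.2 hn
  have hcompl : 1 - (m : ℝ) / (m + n) = n / (m + n) := by field_simp; ring
  have hsplit : cvx (m / (m + n)) (uniform m) (uniform n) = uniform (m + n) ∘ finSumFinEquiv := by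
    funext x
    rcases x with x | x <;> simp [cvx, uniform, hcompl] <;> field_simp
  rw [lossUniform, ← hF.lossToPoint_comp_equiv (isProb_uniform (by omega)) finSumFinEquiv,
    ← hsplit, hF.lossToPoint_cvx (by positivity) (div_le_one_of_le₀ (by linarith) (by positivity))
    (isProb_uniform hm) (isProb_uniform hn), hcompl]
  rfl

lemma lossUniform_one (hF : IsInfoLoss F) : lossUniform F 1 = 0 :=
  hF.lossToPoint_eq_zero_of_isMP (g := fun _ => 0) (isProb_uniform one_pos)
    (fun j => by simp [uniform, onePoint, Fin.fin_one_eq_zero j])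

lemma lossUniform_succ (hF : IsInfoLoss F) {n : ℕ} (hn : 0 < n) :
    lossUniform F (n + 1) = lossBinary F (n / (n + 1)) + n / (n + 1) * lossUniform F n := by
  simpa [hF.lossUniform_one] using hF.lossUniform_add hn one_pos

lemma lossUniform_mul (hF : IsInfoLoss F) {m n : ℕ} (hm : 0 < m) (hn : 0 < n) :
    lossUniform F (m * n) = lossUniform F m + lossUniform F n := by
  induction m, hm using Nat.le_induction with
  | base => simp [hF.lossUniform_one]
  | succ m hm ih =>
    have hmR : (0 : ℝ) < m := Nat.cast_pos.2 hm
    have hnR : (0 : ℝ) < n := Nat.cast_pos.2 hn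
    have hadd := hF.lossUniform_add (Nat.mul_pos hm hn) hn
    have hfrac : ((m * n : ℕ) : ℝ) / ((m * n : ℕ) + n) = m / (m + 1) := by
      push_cast
      field_simp
    have hfrac' : (n : ℝ) / ((m * n : ℕ) + n) = 1 / (m + 1) := by
      push_cast
      field_simp
    rw [hfrac, hfrac', ih, ← Nat.succ_mul] at hadd
    rw [hadd, hF.lossUniform_succ hm]
    field_simp
    ring

lemma tendsto_lossUniform_succ_sub (hF : IsInfoLoss F) :
    Tendsto (fun n => lossUniform F (n + 1) - lossUniform F n) atTop (𝓝 0) := by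
  set ψ : ℕ → ℝ := fun k => lossBinary F (k / (k + 1))
  have hψ : Tendsto ψ atTop (𝓝 0) := by
    simpa [hF.lossBinary_one] using hF.tendsto_lossBinary (fun k => by positivity)
      (fun k => div_le_one_of_le₀ (by linarith) (by positivity)) zero_le_one le_rfl
      (tendsto_natCast_div_add_atTop 1)
  have hψ0 k : 0 ≤ ψ k := hF.lossToPoint_nonneg (isProb_cvx (by positivity)
    (div_le_one_of_le₀ (by linarith) (by positivity)) isProb_onePoint isProb_onePoint)
  have hnonneg {n : ℕ} (hn : 0 < n) : 0 ≤ lossUniform F n :=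
    hF.lossToPoint_nonneg (isProb_uniform hn)
  have hle {n : ℕ} (hn : 0 < n) : lossUniform F n ≤ ∑ k ∈ Finset.range n, ψ k := by
    induction n, hn using Nat.le_induction with
    | base => simp [hF.lossUniform_one, hψ0]
    | succ n hn ih =>
      rw [hF.lossUniform_succ hn, Finset.sum_range_succ]
      have : (n : ℝ) / (n + 1) * lossUniform F n ≤ lossUniform F n :=
        mul_le_of_le_one_left (hnonneg hn) (div_le_one_of_le₀ (by linarith) (by positivity))
      linarith
  have hratio : Tendsto (fun n : ℕ => lossUniform F n / (n + 1)) atTop (𝓝 0) := by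
    refine squeeze_zero' ?_ ?_ (hψ.cesaro.comp (tendsto_add_atTop_nat 1))
    · filter_upwards [eventually_gt_atTop 0] with n hn
      exact div_nonneg (hnonneg hn) (by positivity)
    · filter_upwards [eventually_gt_atTop 0] with n hn
      rw [Function.comp_apply, div_eq_inv_mul, Finset.sum_range_succ]
      push_cast
      exact mul_le_mul_of_nonneg_left ((hle hn).trans (le_add_of_nonneg_right (hψ0 n)))
        (by positivity)
  refine (by simpa using hψ.sub hratio : Tendsto (fun n => ψ n - _) _ _).congr' ?_
  filter_upwards [eventually_gt_atTop 0] with n hn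
  rw [hF.lossUniform_succ hn]
  field_simp
  ring

lemma lossUniform_eq_mul_log (hF : IsInfoLoss F) {n : ℕ} (hn : 0 < n) :
    lossUniform F n = lossUniform F 2 / log 2 * log n :=
  eq_mul_log_of_map_mul_of_tendsto_sub (fun _ _ => hF.lossUniform_mul)
    hF.tendsto_lossUniform_succ_sub hn

lemma lossBinary_eq_mul_binEntropy (hF : IsInfoLoss F) {x : ℝ} (hx0 : 0 ≤ x) (hx1 : x ≤ 1) :
    lossBinary F x = lossUniform F 2 / log 2 * binEntropy x := by
  set c := lossUniform F 2 / log 2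
  have hrat {m n : ℕ} (hm : 0 < m) (hn : 0 < n) :
      lossBinary F (m / (m + n)) = c * binEntropy (m / (m + n)) := by
    have h := hF.lossUniform_add hm hn
    rw [hF.lossUniform_eq_mul_log hm, hF.lossUniform_eq_mul_log hn,
      hF.lossUniform_eq_mul_log (Nat.add_pos_left hm n)] at h
    rw [binEntropy_div_add (Nat.cast_pos.2 hm) (Nat.cast_pos.2 hn)]
    push_cast at h
    linear_combination -h
  obtain ⟨m, n, hm, hn, hlim⟩ := exists_tendsto_div_add hx0 hx1
  have hpos t : (0 : ℝ) < m t + n t := by have := hm t; positivity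
  refine tendsto_nhds_unique (hF.tendsto_lossBinary (fun t => by have := hm t; positivity)
    (fun t => div_le_one_of_le₀ (by simp) (hpos t).le) hx0 hx1 hlim) ?_
  simp only [hrat (hm _) (hn _)]
  exact ((binEntropy_continuous.tendsto x).comp hlim).const_mul c

lemma lossToPoint_option (hF : IsInfoLoss F) {α : Type} [Fintype α] {c : ℝ}
    (hbin : ∀ x, 0 ≤ x → x ≤ 1 → lossBinary F x = c * binEntropy x)
    (ih : ∀ p : α → ℝ, IsProb p → lossToPoint F p = c * shannon p)
    {p : Option α → ℝ} (hp : IsProb p) : lossToPoint F p = c * shannon p := by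
  have hsum : p none + ∑ a, p (some a) = 1 := (Fintype.sum_option p).symm.trans hp.2
  have hrest : 0 ≤ ∑ a, p (some a) := Finset.sum_nonneg fun a _ => hp.1 _
  rcases (show p none ≤ 1 by linarith).eq_or_lt with hnone | hnone
  · have hsome a : p (some a) = 0 :=
      (Finset.sum_eq_zero_iff_of_nonneg fun a _ => hp.1 _).1 (by linarith) a (Finset.mem_univ a)
    have hI : lossToPoint F p = 0 := hF.lossToPoint_eq_zero_of_isMP (g := fun _ => none) hp
      (by rintro (_ | a) <;> simp [onePoint, hnone, hsome])
    simp [hI, shannon, hnone, hsome]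
  · set lam := 1 - p none
    have hlam : 0 < lam := by linarith
    set p' : α → ℝ := fun a => p (some a) / lam
    have hp' : IsProb p' := ⟨fun a => div_nonneg (hp.1 _) hlam.le, by
      rw [← Finset.sum_div, div_eq_one_iff_eq hlam.ne']
      linarith⟩
    have hsplit : p = cvx lam p' onePoint ∘ Equiv.optionEquivSumPUnit α := by
      funext x
      rcases x with _ | a
      · simp [cvx, onePoint, lam]
      · simp [cvx, p', mul_div_cancel₀ _ hlam.ne']
    have hcvx := isProb_cvx hlam.le (by linarith [hp.1 none]) hp' isProb_onePoint
    rw [hsplit, hF.lossToPoint_comp_equiv hcvx, shannon_comp_equiv,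
      hF.lossToPoint_cvx hlam.le (by linarith [hp.1 none]) hp' isProb_onePoint,
      shannon_cvx hp'.2 isProb_onePoint.2, ih p' hp', hbin lam hlam.le (by linarith [hp.1 none]),
      hF.lossToPoint_onePoint, shannon_onePoint]
    ring

lemma lossToPoint_eq_mul_shannon (hF : IsInfoLoss F) {X : Type} [Fintype X] {p : X → ℝ}
    (hp : IsProb p) : lossToPoint F p = lossUniform F 2 / log 2 * shannon p := by
  refine Fintype.induction_empty_option (P := fun X _ => ∀ p : X → ℝ, IsProb p →
    lossToPoint F p = lossUniform F 2 / log 2 * shannon p) ?_ ?_ ?_ X p hp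
  · intro α β _ e ih p hp
    let _ : Fintype α := Fintype.ofEquiv β e.symm
    rw [← hF.lossToPoint_comp_equiv hp e, ← shannon_comp_equiv p e]
    exact ih _ (hp.comp_equiv e)
  · intro p hp
    simpa using hp.2
  · intro α _ ih p hp
    exact hF.lossToPoint_option (fun x hx0 hx1 => hF.lossBinary_eq_mul_binEntropy hx0 hx1) ih hp

end IsInfoLoss

/-- Characterization of Shannon information loss (Baez–Fritz–Leinster, Theorem 2). -/
theorem stmt0
    (F : ∀ {X Y : Type} [Fintype X] [Fintype Y], (X → ℝ) → (Y → ℝ) → (X → Y) → ℝ)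
    (hnn : ∀ {X Y : Type} [Fintype X] [Fintype Y] (p : X → ℝ) (q : Y → ℝ) (f : X → Y),
      IsProb p → IsProb q → IsMP p q f → 0 ≤ F p q f)
    (hfunc : ∀ {X Y Z : Type} [Fintype X] [Fintype Y] [Fintype Z]
      (p : X → ℝ) (q : Y → ℝ) (r : Z → ℝ) (g : X → Y) (f : Y → Z),
      IsProb p → IsProb q → IsProb r → IsMP p q g → IsMP q r f →
      F p r (f ∘ g) = F q r f + F p q g)
    (hcvx : ∀ {X X' Y Y' : Type} [Fintype X] [Fintype X'] [Fintype Y] [Fintype Y']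
      (p : X → ℝ) (p' : X' → ℝ) (q : Y → ℝ) (q' : Y' → ℝ) (f : X → X') (g : Y → Y')
      (lam : ℝ), 0 ≤ lam → lam ≤ 1 →
      IsProb p → IsProb p' → IsProb q → IsProb q' → IsMP p p' f → IsMP q q' g →
      F (cvx lam p q) (cvx lam p' q') (Sum.map f g)
        = lam * F p p' f + (1 - lam) * F q q' g)
    (hcont : ∀ {X Y : Type} [Fintype X] [Fintype Y]
      (pn : ℕ → X → ℝ) (qn : ℕ → Y → ℝ) (fn : ℕ → X → Y)
      (p : X → ℝ) (q : Y → ℝ) (f : X → Y),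
      (∀ n, IsProb (pn n)) → (∀ n, IsProb (qn n)) → (∀ n, IsMP (pn n) (qn n) (fn n)) →
      IsProb p → IsProb q → IsMP p q f →
      (∀ᶠ n in atTop, fn n = f) →
      (∀ i, Tendsto (fun n => pn n i) atTop (𝓝 (p i))) →
      (∀ j, Tendsto (fun n => qn n j) atTop (𝓝 (q j))) →
      Tendsto (fun n => F (pn n) (qn n) (fn n)) atTop (𝓝 (F p q f))) :
    ∃ c : ℝ, 0 ≤ c ∧ ∀ {X Y : Type} [Fintype X] [Fintype Y]
      (p : X → ℝ) (q : Y → ℝ) (f : X → Y),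
      IsProb p → IsProb q → IsMP p q f →
      F p q f = c * (shannon p - shannon q) := by
  have hF : IsInfoLoss @F := ⟨@hnn, @hfunc, @hcvx, @hcont⟩
  refine ⟨lossUniform F 2 / log 2, div_nonneg (hF.lossToPoint_nonneg (isProb_uniform two_pos))
    (log_nonneg one_le_two), fun p q f hp hq hf => ?_⟩
  have h := hF.lossToPoint_eq_add hp hq hf
  rw [hF.lossToPoint_eq_mul_shannon hp, hF.lossToPoint_eq_mul_shannon hq] at h
  linarith
end

section
/- For any constant c ≥ 0, the map F defined on measure-preserving functions f : (X,p) → (Y,q) between finite measure spaces by F(f) = c(H(p) − H(q)), where H is the extended Shannon entropy, takes values in [0,∞) and satisfies functoriality (F(f ∘ g) = F(f) + F(g)), additivity (F(f ⊕ g) = F(f) + F(g)), homogeneity (F(λf) = λF(f) for λ ∈ [0,∞)), and continuity. -/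
open scoped BigOperators Classical
open Filter Topology Real

/-!
Writing `η x = -x log x`, the extended entropy of a measure is `H(p) = ∑ᵢ η(pᵢ) - η(‖p‖)`.
Measure-preserving maps preserve total mass, so `H(p) - H(q) = ∑ᵢ η(pᵢ) - ∑ⱼ η(qⱼ)`; this is
nonnegative because `η` is subadditive on `[0, ∞)` and each `qⱼ` is the sum of `p` over a fibre.
Homogeneity holds because normalisation forgets the scale, additivity because the mass
corrections of `p ⊕ q` and `p' ⊕ q'` agree, and continuity because `η` is continuous.
-/

lemma Real.negMulLog_add_le {a b : ℝ} (ha : 0 ≤ a) (hb : 0 ≤ b) :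
    negMulLog (a + b) ≤ negMulLog a + negMulLog b := by
  have mul_log_le : ∀ {x}, 0 ≤ x → x ≤ a + b → x * log x ≤ x * log (a + b) := fun {x} hx hxab => by
    rcases hx.eq_or_lt with rfl | hx
    · simp
    · exact mul_le_mul_of_nonneg_left (log_le_log hx hxab) hx.le
  simp only [negMulLog, neg_mul]
  nlinarith [mul_log_le ha (by linarith), mul_log_le hb (by linarith)]

lemma Real.negMulLog_sum_le {ι : Type*} (s : Finset ι) {p : ι → ℝ} (hp : ∀ i ∈ s, 0 ≤ p i) :
    negMulLog (∑ i ∈ s, p i) ≤ ∑ i ∈ s, negMulLog (p i) :=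
  Finset.le_sum_of_subadditive_on_pred negMulLog (0 ≤ ·) negMulLog_zero.le
    (fun _ _ => negMulLog_add_le) (fun _ _ => add_nonneg) p hp

section IsMP

variable {X Y : Type} [Fintype X] [Fintype Y] {p : X → ℝ} {q : Y → ℝ} {f : X → Y}

lemma IsMP.apply_eq_sum_fiber (h : IsMP p q f) (j : Y) :
    q j = ∑ i with f i = j, p i := by
  rw [h j, Finset.sum_filter]

lemma IsMP.sum_eq (h : IsMP p q f) : ∑ j, q j = ∑ i, p i := by
  simp only [h.apply_eq_sum_fiber]
  exact Finset.sum_fiberwise _ f p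

lemma IsMP.isMeas (h : IsMP p q f) (hp : IsMeas p) : IsMeas q := fun j => by
  rw [h.apply_eq_sum_fiber]
  exact Finset.sum_nonneg fun i _ => hp i

lemma IsMP.sum_negMulLog_le (h : IsMP p q f) (hp : IsMeas p) :
    ∑ j, negMulLog (q j) ≤ ∑ i, negMulLog (p i) := by
  rw [← Finset.sum_fiberwise Finset.univ f fun i => negMulLog (p i)]
  refine Finset.sum_le_sum fun j _ => ?_
  rw [h.apply_eq_sum_fiber]
  exact negMulLog_sum_le _ fun i _ => hp i

end IsMP

section shannonExt

variable {X Y : Type} [Fintype X] [Fintype Y]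

lemma shannonExt_eq_sum_negMulLog_sub {p : X → ℝ} (hp : IsMeas p) :
    shannonExt p = ∑ i, negMulLog (p i) - negMulLog (∑ i, p i) := by
  by_cases hM : ∑ i, p i = 0
  · have hzero : ∀ i, p i = 0 := fun i =>
      (Finset.sum_eq_zero_iff_of_nonneg fun i _ => hp i).mp hM i (Finset.mem_univ i)
    simp [shannonExt, hzero]
  · have hterm : ∀ i, (∑ j, p j) * -((p i / ∑ j, p j) * log (p i / ∑ j, p j))
        = negMulLog (p i) + p i * log (∑ j, p j) := by
      intro i
      by_cases hi : p i = 0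
      · simp [hi]
      · rw [log_div hi hM, negMulLog]
        field_simp
        ring
    rw [shannonExt, if_neg hM, shannon, ← Finset.sum_neg_distrib, Finset.mul_sum]
    simp only [hterm, Finset.sum_add_distrib, ← Finset.sum_mul, negMulLog]
    ring

lemma shannonExt_smul (lam : ℝ) (p : X → ℝ) :
    shannonExt (fun i => lam * p i) = lam * shannonExt p := by
  rcases eq_or_ne lam 0 with rfl | hlam
  · simp [shannonExt]
  by_cases hM : ∑ i, p i = 0
  · simp [shannonExt, ← Finset.mul_sum, hM]
  · have hnorm : (fun i => lam * p i / ∑ j, lam * p j) = fun i => p i / ∑ j, p j := by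
      simp only [← Finset.mul_sum, mul_div_mul_left _ _ hlam]
    rw [shannonExt, shannonExt, hnorm, ← Finset.mul_sum, if_neg (mul_ne_zero hlam hM), if_neg hM]
    ring

lemma shannonExt_dsum {p : X → ℝ} {q : Y → ℝ} (hp : IsMeas p) (hq : IsMeas q) :
    shannonExt (dsum p q) = shannonExt p + shannonExt q
      + (negMulLog (∑ i, p i) + negMulLog (∑ j, q j) - negMulLog (∑ i, p i + ∑ j, q j)) := by
  rw [shannonExt_eq_sum_negMulLog_sub (Sum.rec hp hq : IsMeas (dsum p q)),
    shannonExt_eq_sum_negMulLog_sub hp, shannonExt_eq_sum_negMulLog_sub hq]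
  simp only [Fintype.sum_sum_type, dsum, Sum.elim_inl, Sum.elim_inr]
  ring

lemma IsMP.shannonExt_le {p : X → ℝ} {q : Y → ℝ} {f : X → Y} (h : IsMP p q f) (hp : IsMeas p) :
    shannonExt q ≤ shannonExt p := by
  rw [shannonExt_eq_sum_negMulLog_sub hp, shannonExt_eq_sum_negMulLog_sub (h.isMeas hp), h.sum_eq]
  linarith [h.sum_negMulLog_le hp]

lemma continuousOn_shannonExt : ContinuousOn (shannonExt (X := X)) {p | IsMeas p} :=
  ContinuousOn.congr (f := fun p => ∑ i, negMulLog (p i) - negMulLog (∑ i, p i))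
    (by fun_prop) fun p hp => shannonExt_eq_sum_negMulLog_sub hp

lemma tendsto_shannonExt {ι : Type*} {l : Filter ι} {pn : ι → X → ℝ} {p : X → ℝ}
    (hpn : ∀ n, IsMeas (pn n)) (hp : IsMeas p) (hlim : ∀ i, Tendsto (pn · i) l (𝓝 (p i))) :
    Tendsto (fun n => shannonExt (pn n)) l (𝓝 (shannonExt p)) :=
  (continuousOn_shannonExt.continuousWithinAt hp).tendsto.comp <|
    tendsto_nhdsWithin_iff.2 ⟨tendsto_pi_nhds.2 hlim, Eventually.of_forall hpn⟩

end shannonExt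

/-- The map `f ↦ c (H(p) - H(q))` on finite measure spaces is nonnegative, functorial,
additive, homogeneous and continuous. -/
theorem stmt3 (c : ℝ) (hc : 0 ≤ c) :
    -- takes values in [0, ∞)
    (∀ {X Y : Type} [Fintype X] [Fintype Y] (p : X → ℝ) (q : Y → ℝ) (f : X → Y),
      IsMeas p → IsMeas q → IsMP p q f → 0 ≤ c * (shannonExt p - shannonExt q)) ∧
    -- functoriality
    (∀ {X Y Z : Type} [Fintype X] [Fintype Y] [Fintype Z]
      (p : X → ℝ) (q : Y → ℝ) (r : Z → ℝ) (g : X → Y) (f : Y → Z),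
      IsMeas p → IsMeas q → IsMeas r → IsMP p q g → IsMP q r f →
      c * (shannonExt p - shannonExt r)
        = c * (shannonExt q - shannonExt r) + c * (shannonExt p - shannonExt q)) ∧
    -- additivity
    (∀ {X X' Y Y' : Type} [Fintype X] [Fintype X'] [Fintype Y] [Fintype Y']
      (p : X → ℝ) (p' : X' → ℝ) (q : Y → ℝ) (q' : Y' → ℝ) (f : X → X') (g : Y → Y'),
      IsMeas p → IsMeas p' → IsMeas q → IsMeas q' → IsMP p p' f → IsMP q q' g →
      c * (shannonExt (dsum p q) - shannonExt (dsum p' q'))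
        = c * (shannonExt p - shannonExt p') + c * (shannonExt q - shannonExt q')) ∧
    -- homogeneity
    (∀ {X Y : Type} [Fintype X] [Fintype Y] (p : X → ℝ) (q : Y → ℝ) (f : X → Y)
      (lam : ℝ), 0 ≤ lam → IsMeas p → IsMeas q → IsMP p q f →
      c * (shannonExt (fun i => lam * p i) - shannonExt (fun j => lam * q j))
        = lam * (c * (shannonExt p - shannonExt q))) ∧
    -- continuity
    (∀ {X Y : Type} [Fintype X] [Fintype Y]
      (pn : ℕ → X → ℝ) (qn : ℕ → Y → ℝ) (fn : ℕ → X → Y)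
      (p : X → ℝ) (q : Y → ℝ) (f : X → Y),
      (∀ n, IsMeas (pn n)) → (∀ n, IsMeas (qn n)) → (∀ n, IsMP (pn n) (qn n) (fn n)) →
      IsMeas p → IsMeas q → IsMP p q f →
      (∀ᶠ n in atTop, fn n = f) →
      (∀ i, Tendsto (fun n => pn n i) atTop (𝓝 (p i))) →
      (∀ j, Tendsto (fun n => qn n j) atTop (𝓝 (q j))) →
      Tendsto (fun n => c * (shannonExt (pn n) - shannonExt (qn n))) atTop
        (𝓝 (c * (shannonExt p - shannonExt q)))) := by
  refine ⟨?_, ?_, ?_, ?_, ?_⟩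
  · intro X Y _ _ p q f hp _ hf
    exact mul_nonneg hc (sub_nonneg.2 (hf.shannonExt_le hp))
  · intros
    ring
  · intro X X' Y Y' _ _ _ _ p p' q q' f g hp hp' hq hq' hf hg
    rw [shannonExt_dsum hp hq, shannonExt_dsum hp' hq', hf.sum_eq, hg.sum_eq]
    ring
  · intro X Y _ _ p q f lam _ _ _ _
    rw [shannonExt_smul, shannonExt_smul]
    ring
  · intro X Y _ _ pn qn fn p q f hpn hqn _ hp hq _ _ hpt hqt
    exact ((tendsto_shannonExt hpn hp hpt).sub (tendsto_shannonExt hqn hq hqt)).const_mul c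
end

section
/- If φ : ℕ₊ → ℝ satisfies φ(nm) = φ(n) + φ(m) for all positive integers n, m, and lim_{n→∞} (φ(n+1) − φ(n)) = 0, then there exists a constant c ∈ ℝ such that φ(n) = c ln(n) for all positive integers n. -/
open scoped BigOperators Classical
open Filter Topology Real

/-!
Subtracting `c log n` with `c = φ 2 / log 2` leaves a completely additive `ψ` with `ψ 2 = 0` whose
successive differences still tend to `0`. For large `m` the values `ψ m` and `ψ (m / 2)` are then
`ε`-close, so halving down to a bounded range gives `|ψ m| ≤ ε log₂ m + O(1)`, i.e. `ψ = o(log)`.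
Since `ψ (n ^ k) = k ψ n` while `log (n ^ k) = k log n`, this forces `ψ n = 0`.
-/

open Asymptotics

section CompletelyAdditive

variable {ψ : ℕ → ℝ}

theorem exists_abs_le_mul_log_add_of_map_two_mul (h2 : ∀ n, ψ (2 * n) = ψ n)
    (hψ : Tendsto (fun n => ψ (n + 1) - ψ n) atTop (𝓝 0)) {ε : ℝ} (hε : 0 < ε) :
    ∃ D, ∀ m : ℕ, |ψ m| ≤ ε * log m + D := by
  obtain ⟨N, hN⟩ := Metric.tendsto_atTop.1 hψ (ε * log 2) (by positivity)
  have hhalf : ∀ m, 2 * N ≤ m → |ψ m - ψ (m / 2)| ≤ ε * log 2 := by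
    intro m hm
    obtain ⟨q, rfl | rfl⟩ := Nat.even_or_odd' m
    · rw [Nat.mul_div_cancel_left q two_pos, h2, sub_self, abs_zero]
      positivity
    · have hq := hN (2 * q) (by omega)
      rw [dist_zero_right, norm_eq_abs, h2] at hq
      rw [show (2 * q + 1) / 2 = q by omega]
      exact hq.le
  set D := ∑ m ∈ Finset.range (2 * N + 2), |ψ m|
  refine ⟨D, fun m => ?_⟩
  induction m using Nat.strong_induction_on with
  | _ m ih =>
  by_cases hm : m < 2 * N + 2
  · have hD := Finset.single_le_sum (fun i _ => abs_nonneg (ψ i)) (Finset.mem_range.2 hm)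
    have hlog := mul_nonneg hε.le (log_natCast_nonneg m)
    linarith
  · have hq : (0 : ℝ) < (m / 2 : ℕ) := Nat.cast_pos.2 (by omega)
    have hlog : log 2 + log (m / 2 : ℕ) ≤ log m := by
      rw [← log_mul two_ne_zero hq.ne']
      exact log_le_log (by positivity) (by exact_mod_cast Nat.mul_div_le m 2)
    have htri := abs_sub_abs_le_abs_sub (ψ m) (ψ (m / 2))
    have hstep := hhalf m (by omega)
    have hrec := ih (m / 2) (by omega)
    have hεlog := mul_le_mul_of_nonneg_left hlog hε.le
    linarith

theorem isLittleO_log_of_map_two_mul (h2 : ∀ n, ψ (2 * n) = ψ n)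
    (hψ : Tendsto (fun n => ψ (n + 1) - ψ n) atTop (𝓝 0)) :
    ψ =o[atTop] fun m : ℕ => log m := by
  refine isLittleO_iff.2 fun ε hε => ?_
  obtain ⟨D, hD⟩ := exists_abs_le_mul_log_add_of_map_two_mul h2 hψ (half_pos hε)
  have hlarge : ∀ᶠ m : ℕ in atTop, 2 * D / ε ≤ log m :=
    (tendsto_log_atTop.comp tendsto_natCast_atTop_atTop).eventually_ge_atTop _
  filter_upwards [hlarge] with m hm
  rw [div_le_iff₀ hε] at hm
  rw [norm_eq_abs, norm_eq_abs, abs_of_nonneg (log_natCast_nonneg m)]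
  linarith [hD m]

theorem eq_zero_of_isLittleO_log {n : ℕ} (hn : 2 ≤ n) (hpow : ∀ k : ℕ, ψ (n ^ k) = k * ψ n)
    (ho : ψ =o[atTop] fun m : ℕ => log m) : ψ n = 0 := by
  have hratio := (ho.comp_tendsto (tendsto_pow_atTop_atTop_of_one_lt hn)).tendsto_div_nhds_zero
  simp only [Function.comp_def, hpow, Nat.cast_pow, log_pow] at hratio
  have hconst : Tendsto (fun k : ℕ => k * ψ n / (k * log n)) atTop (𝓝 (ψ n / log n)) :=
    tendsto_const_nhds.congr' <| (eventually_ne_atTop 0).mono fun k hk =>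
      (mul_div_mul_left _ _ (Nat.cast_ne_zero.2 hk)).symm
  have hlog : log n ≠ 0 := (log_pos (by exact_mod_cast hn)).ne'
  exact (div_eq_zero_iff.1 (tendsto_nhds_unique hconst hratio)).resolve_right hlog

theorem eq_zero_of_map_mul_of_tendsto_sub_s11 (hmul : ∀ a b, 0 < a → 0 < b → ψ (a * b) = ψ a + ψ b)
    (h2 : ψ 2 = 0) (hψ : Tendsto (fun n => ψ (n + 1) - ψ n) atTop (𝓝 0)) {n : ℕ} (hn : 0 < n) :
    ψ n = 0 := by
  have h1 : ψ 1 = 0 := by simpa using hmul 1 1 one_pos one_pos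
  have hpow : ∀ k : ℕ, ψ (n ^ k) = k * ψ n := by
    intro k
    induction k with
    | zero => simp [h1]
    | succ k ih => rw [pow_succ, hmul _ _ (pow_pos hn k) hn, ih]; push_cast; ring
  have hdouble : ∀ m, ψ (2 * m) = ψ m := by
    rintro (_ | m)
    · rfl
    · rw [hmul 2 _ two_pos m.succ_pos, h2, zero_add]
  obtain rfl | hn2 := (Nat.one_le_iff_ne_zero.2 hn.ne').eq_or_lt
  · exact h1
  · exact eq_zero_of_isLittleO_log hn2 hpow (isLittleO_log_of_map_two_mul hdouble hψ)

end CompletelyAdditive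

theorem Nat.toPNat'_mul {a b : ℕ} (ha : 0 < a) (hb : 0 < b) :
    (a * b).toPNat' = a.toPNat' * b.toPNat' :=
  PNat.eq <| by simp [ha, hb]

theorem Nat.toPNat'_add_one {n : ℕ} (hn : 0 < n) : (n + 1).toPNat' = n.toPNat' + 1 :=
  PNat.eq <| by simp [hn]

theorem Nat.tendsto_toPNat'_atTop : Tendsto Nat.toPNat' atTop atTop :=
  tendsto_atTop_atTop.2 fun b => ⟨b, fun n hn => by
    rw [← PNat.coe_le_coe, PNat.toPNat'_coe (b.pos.trans_le hn)]
    exact hn⟩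

/-- A multiplicative-to-additive function on positive integers whose successive
differences tend to zero is a multiple of the natural logarithm. -/
theorem stmt11 (φ : ℕ+ → ℝ)
    (hmul : ∀ n m : ℕ+, φ (n * m) = φ n + φ m)
    (hlim : Tendsto (fun n : ℕ+ => φ (n + 1) - φ n) atTop (𝓝 0)) :
    ∃ c : ℝ, ∀ n : ℕ+, φ n = c * Real.log (n : ℕ) := by
  set c := φ 2 / log 2
  set ψ : ℕ → ℝ := fun m => φ m.toPNat' - c * log m with hψ
  have hψmul : ∀ a b, 0 < a → 0 < b → ψ (a * b) = ψ a + ψ b := by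
    intro a b ha hb
    simp only [hψ, Nat.toPNat'_mul ha hb, hmul, Nat.cast_mul,
      log_mul (Nat.cast_ne_zero.2 ha.ne') (Nat.cast_ne_zero.2 hb.ne')]
    ring
  have hψ2 : ψ 2 = 0 := by
    simp only [hψ, c, Nat.cast_ofNat, div_mul_cancel₀ _ (log_pos one_lt_two).ne']
    exact sub_self _
  have hψlim : Tendsto (fun n => ψ (n + 1) - ψ n) atTop (𝓝 0) := by
    have h := (hlim.comp Nat.tendsto_toPNat'_atTop).sub (tendsto_log_nat_add_one_sub_log.const_mul c)
    rw [mul_zero, sub_zero] at h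
    refine h.congr' ((eventually_gt_atTop 0).mono fun n hn => ?_)
    simp only [hψ, Function.comp_apply, Nat.toPNat'_add_one hn, Nat.cast_add_one]
    ring
  refine ⟨c, fun n => ?_⟩
  simpa [hψ, sub_eq_zero] using eq_zero_of_map_mul_of_tendsto_sub_s11 hψmul hψ2 hψlim n.pos
end

section
/- Let I be a map sending every probability measure on every finite set to a nonnegative real number which is invariant under bijections and satisfies I(p_1 q(1) ⊕ ⋯ ⊕ p_n q(n)) = I(p) + Σ_{i=1}^n p_i I(q(i)) for all probability measures p on {1,…,n} and probability measures q(1),…,q(n) on finite sets. Define φ(n) to be the value of I on the uniform probability measure on an n-element set. Then φ(nm) = φ(n) + φ(m) for all positive integers n, m. -/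
open scoped BigOperators Classical
open Filter Topology Real

def IsStronglyAdditive (I : ∀ {X : Type} [Fintype X], (X → ℝ) → ℝ) : Prop :=
  ∀ (n : ℕ) (Xs : Fin n → Type) [∀ i, Fintype (Xs i)] (p : Fin n → ℝ) (q : ∀ i, Xs i → ℝ),
    IsProb p → (∀ i, IsProb (q i)) →
    I (fun x : Σ i, Xs i => p x.1 * q x.1 x.2) = I p + ∑ i, p i * I (q i)

lemma isProb_uniform_fin {n : ℕ} (hn : 0 < n) : IsProb (fun _ : Fin n => (1 : ℝ) / n) :=
  ⟨fun _ => by positivity, by simp [hn.ne']⟩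

lemma IsStronglyAdditive.sigma_const {I : ∀ {X : Type} [Fintype X], (X → ℝ) → ℝ}
    (hI : IsStronglyAdditive I) {n : ℕ} {Y : Type} [Fintype Y] {p : Fin n → ℝ} {q : Y → ℝ}
    (hp : IsProb p) (hq : IsProb q) :
    I (fun x : Σ _ : Fin n, Y => p x.1 * q x.2) = I p + I q :=
  calc I (fun x : Σ _ : Fin n, Y => p x.1 * q x.2) = I p + ∑ i, p i * I q :=
        hI n (fun _ => Y) p (fun _ => q) hp fun _ => hq
    _ = I p + I q := by rw [← Finset.sum_mul, hp.2, one_mul]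

theorem stmt12_general
    (I : ∀ {X : Type} [Fintype X], (X → ℝ) → ℝ)
    (hbij : ∀ {X X' : Type} [Fintype X] [Fintype X'] (e : X ≃ X') (p : X → ℝ),
      IsProb p → I (fun j => p (e.symm j)) = I p)
    (hstrong : ∀ (n : ℕ) (Xs : Fin n → Type) [∀ i, Fintype (Xs i)]
      (p : Fin n → ℝ) (q : ∀ i, Xs i → ℝ),
      IsProb p → (∀ i, IsProb (q i)) →
      I (fun x : Σ i, Xs i => p x.1 * q x.1 x.2) = I p + ∑ i, p i * I (q i)) :
    ∀ n m : ℕ, 0 < n → 0 < m →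
      I (fun _ : Fin (n * m) => (1 : ℝ) / (n * m : ℕ))
        = I (fun _ : Fin n => (1 : ℝ) / n) + I (fun _ : Fin m => (1 : ℝ) / m) := by
  intro n m hn hm
  let e : (Σ _ : Fin n, Fin m) ≃ Fin (n * m) := (Equiv.sigmaEquivProd _ _).trans finProdFinEquiv
  calc I (fun _ : Fin (n * m) => (1 : ℝ) / (n * m : ℕ))
      = I (fun _ : Σ _ : Fin n, Fin m => (1 : ℝ) / n * (1 / m)) := by
        rw [← hbij e.symm _ (isProb_uniform_fin (Nat.mul_pos hn hm)), Nat.cast_mul,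
          one_div_mul_one_div]
    _ = _ := IsStronglyAdditive.sigma_const hstrong (isProb_uniform_fin hn) (isProb_uniform_fin hm)

/-- For `I` bijection-invariant and strongly additive, the value `φ(n)` of `I` on
the uniform measure on an `n`-element set satisfies `φ(nm) = φ(n) + φ(m)`. -/
theorem stmt12
    (I : ∀ {X : Type} [Fintype X], (X → ℝ) → ℝ)
    (hnn : ∀ {X : Type} [Fintype X] (p : X → ℝ), IsProb p → 0 ≤ I p)
    (hbij : ∀ {X X' : Type} [Fintype X] [Fintype X'] (e : X ≃ X') (p : X → ℝ),
      IsProb p → I (fun j => p (e.symm j)) = I p)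
    (hstrong : ∀ (n : ℕ) (Xs : Fin n → Type) [∀ i, Fintype (Xs i)]
      (p : Fin n → ℝ) (q : ∀ i, Xs i → ℝ),
      IsProb p → (∀ i, IsProb (q i)) →
      I (fun x : Σ i, Xs i => p x.1 * q x.1 x.2) = I p + ∑ i, p i * I (q i)) :
    ∀ n m : ℕ, 0 < n → 0 < m →
      I (fun _ : Fin (n * m) => (1 : ℝ) / (n * m : ℕ))
        = I (fun _ : Fin n => (1 : ℝ) / n) + I (fun _ : Fin m => (1 : ℝ) / m) :=
  stmt12_general I hbij hstrong
end
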